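/- arXiv:0912.4100 — 2 statements merged into one kernel-verified Lean document; each statement's English description precedes it below -/
import Mathlib

section
/- Let T be a finite tree and θ a real number. Then T is θ-super positive if and only if θ=0 and T has a perfect matching. -/
/-!
If `u` is a leaf of `T` with neighbour `w`, then `x μ(T) + μ(T\w) = x² μ(T\u)`. For a θ-super
positive tree, θ is a root of `μ(T\u)` and of `μ(T\w)` but not of `μ(T)`, which forces `θ = 0`.
At `0` the multiplicity is read off the lowest coefficients of the matching polynomial: the
constant coefficient of `μ(G)` is `±p(G, n/2)`, nonzero exactly when `G` has a perfect matching,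
and deleting the matching edge at `v` leaves a matching of `G\v` that misses one vertex, so the
linear coefficient of `μ(G\v)` is nonzero while its constant coefficient vanishes.
-/

open Polynomial

namespace MatchPoly

variable {V : Type*}

/-- The number of `r`-matchings in `G`: sets of `r` edges, no two sharing a vertex. -/
noncomputable def numMatchings (G : SimpleGraph V) (r : ℕ) : ℕ :=
  Nat.card {M : Finset (Sym2 V) // M.card = r ∧ (M : Set (Sym2 V)) ⊆ G.edgeSet ∧
    (M : Set (Sym2 V)).Pairwise fun e f => ∀ v : V, v ∈ e → v ∉ f}

/-- The matching polynomial `μ(G,x) = ∑ (-1)^r p(G,r) x^(n-2r)`. -/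
noncomputable def matchingPoly (G : SimpleGraph V) : Polynomial ℝ :=
  ∑ r ∈ Finset.range (Nat.card V + 1),
    Polynomial.C ((-1 : ℝ) ^ r * (numMatchings G r : ℝ)) *
      (Polynomial.X : Polynomial ℝ) ^ (Nat.card V - 2 * r)

/-- `mult θ G`: the multiplicity of `θ` as a root of `μ(G,x)`. -/
noncomputable def mult (θ : ℝ) (G : SimpleGraph V) : ℕ :=
  (matchingPoly G).rootMultiplicity θ

/-- `G \ X`: the induced subgraph on the complement of the vertex set `X`. -/
def deleteSet (G : SimpleGraph V) (X : Set V) : SimpleGraph ↥(Xᶜ) :=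
  G.induce (Xᶜ)

/-- `G \ v`: delete a single vertex. -/
def deleteVert (G : SimpleGraph V) (v : V) : SimpleGraph ↥({v}ᶜ : Set V) :=
  G.induce ({v}ᶜ : Set V)

/-- `u` is θ-essential: `mult(θ, G\u) = mult(θ,G) - 1`. -/
def IsEssential (θ : ℝ) (G : SimpleGraph V) (u : V) : Prop :=
  mult θ (deleteVert G u) + 1 = mult θ G

/-- `u` is θ-neutral: `mult(θ, G\u) = mult(θ,G)`. -/
def IsNeutral (θ : ℝ) (G : SimpleGraph V) (u : V) : Prop :=
  mult θ (deleteVert G u) = mult θ G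

/-- `u` is θ-positive: `mult(θ, G\u) = mult(θ,G) + 1`. -/
def IsPositive (θ : ℝ) (G : SimpleGraph V) (u : V) : Prop :=
  mult θ (deleteVert G u) = mult θ G + 1

/-- `u` is θ-special: not θ-essential but adjacent to a θ-essential vertex. -/
def IsSpecial (θ : ℝ) (G : SimpleGraph V) (u : V) : Prop :=
  ¬ IsEssential θ G u ∧ ∃ w : V, G.Adj u w ∧ IsEssential θ G w

/-- `A_θ(G)`: the set of θ-special vertices. -/
def specialSet (θ : ℝ) (G : SimpleGraph V) : Set V := {u | IsSpecial θ G u}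

/-- `N_θ(G)`: the set of θ-neutral vertices. -/
def neutralSet (θ : ℝ) (G : SimpleGraph V) : Set V := {u | IsNeutral θ G u}

/-- `P_θ(G)`: the set of θ-positive vertices that are not θ-special. -/
def positiveSet (θ : ℝ) (G : SimpleGraph V) : Set V :=
  {u | IsPositive θ G u ∧ ¬ IsSpecial θ G u}

/-- `G` is θ-super positive: `mult(θ,G) = 0` and `mult(θ,G\v) = 1` for every vertex `v`. -/
def IsSuperPositive (θ : ℝ) (G : SimpleGraph V) : Prop :=
  mult θ G = 0 ∧ ∀ v : V, mult θ (deleteVert G v) = 1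

/-- `G` is θ-elementary: θ-super positive and `P_θ(G\v) = ∅` for every vertex `v`. -/
def IsElementary (θ : ℝ) (G : SimpleGraph V) : Prop :=
  IsSuperPositive θ G ∧ ∀ v : V, positiveSet θ (deleteVert G v) = ∅

/-- `G` is θ-critical: every vertex is θ-essential and `mult(θ,G) = 1`. -/
def IsCritical (θ : ℝ) (G : SimpleGraph V) : Prop :=
  (∀ v : V, IsEssential θ G v) ∧ mult θ G = 1

/-- `c_θ(G)`: the number of θ-critical connected components of `G`. -/
noncomputable def numCritComponents (θ : ℝ) (G : SimpleGraph V) : ℕ :=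
  Nat.card {c : G.ConnectedComponent // IsCritical θ (G.induce c.supp)}

/-- `X` is a θ-barrier set: `mult(θ,G) = c_θ(G\X) - |X|`. -/
def IsBarrier (θ : ℝ) (G : SimpleGraph V) (X : Set V) : Prop :=
  numCritComponents θ (deleteSet G X) = mult θ G + X.ncard

/-- `X` is a θ-extreme set: `mult(θ,G\X) = mult(θ,G) + |X|`. -/
def IsExtreme (θ : ℝ) (G : SimpleGraph V) (X : Set V) : Prop :=
  mult θ (deleteSet G X) = mult θ G + X.ncard

/-- `G` is θ-base: θ-super positive and no θ-barrier set contains two adjacent vertices. -/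
def IsBase (θ : ℝ) (G : SimpleGraph V) : Prop :=
  IsSuperPositive θ G ∧
    ∀ X : Set V, IsBarrier θ G X → ∀ u v : V, u ∈ X → v ∈ X → ¬ G.Adj u v

def IsMatchingSet (G : SimpleGraph V) (M : Finset (Sym2 V)) : Prop :=
  (M : Set (Sym2 V)) ⊆ G.edgeSet ∧
    (M : Set (Sym2 V)).Pairwise fun e f => ∀ v : V, v ∈ e → v ∉ f

def matchingsOfCard (G : SimpleGraph V) (r : ℕ) : Set (Finset (Sym2 V)) :=
  {M | M.card = r ∧ IsMatchingSet G M}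

theorem numMatchings_eq_ncard (G : SimpleGraph V) (r : ℕ) :
    numMatchings G r = (matchingsOfCard G r).ncard := rfl

theorem card_compl_singleton_add_one [Finite V] (v : V) :
    Nat.card ↥({v}ᶜ : Set V) + 1 = Nat.card V := by
  rw [Nat.card_coe_set_eq, add_comm, ← Set.ncard_singleton v, Set.ncard_add_ncard_compl]

section IsMatchingSet

variable {G : SimpleGraph V} {M N : Finset (Sym2 V)}

theorem isMatchingSet_empty : IsMatchingSet G ∅ := by
  simp [IsMatchingSet]

theorem IsMatchingSet.subset (hM : IsMatchingSet G M) (h : N ⊆ M) : IsMatchingSet G N :=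
  ⟨(Finset.coe_subset.2 h).trans hM.1, hM.2.mono (Finset.coe_subset.2 h)⟩

theorem IsMatchingSet.insert [DecidableEq V] (hM : IsMatchingSet G M) {e : Sym2 V}
    (he : e ∈ G.edgeSet) (hdisj : ∀ f ∈ M, ∀ v ∈ e, v ∉ f) : IsMatchingSet G (insert e M) := by
  rw [IsMatchingSet, Finset.coe_insert, Set.insert_subset_iff, Set.pairwise_insert]
  exact ⟨⟨he, hM.1⟩, hM.2, fun f hf _ => ⟨fun v hve => hdisj f hf v hve,
    fun v hvf hve => hdisj f hf v hve hvf⟩⟩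

theorem IsMatchingSet.eq_of_mem (hM : IsMatchingSet G M) {e f : Sym2 V} (he : e ∈ M)
    (hf : f ∈ M) {v : V} (hve : v ∈ e) (hvf : v ∈ f) : e = f :=
  by_contra fun h => hM.2 he hf h v hve hvf

theorem IsMatchingSet.card_biUnion [DecidableEq V] (hM : IsMatchingSet G M) :
    (M.biUnion Sym2.toFinset).card = 2 * M.card := by
  rw [Finset.card_biUnion, Finset.sum_congr rfl fun e he =>
    Sym2.card_toFinset_of_not_isDiag e (G.not_isDiag_of_mem_edgeSet (hM.1 he))]
  · simp [mul_comm]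
  · intro e he f hf hef
    simp only [Function.onFun, Finset.disjoint_left, Sym2.mem_toFinset]
    exact hM.2 he hf hef

theorem IsMatchingSet.two_mul_card_le [Finite V] (hM : IsMatchingSet G M) :
    2 * M.card ≤ Nat.card V := by
  classical
  have := Fintype.ofFinite V
  rw [← hM.card_biUnion, Nat.card_eq_fintype_card]
  exact Finset.card_le_univ _

theorem IsMatchingSet.two_mul_card_eq_iff [Finite V] (hM : IsMatchingSet G M) :
    2 * M.card = Nat.card V ↔ ∀ v, ∃ e ∈ M, v ∈ e := by
  classical
  have := Fintype.ofFinite V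
  rw [← hM.card_biUnion, Nat.card_eq_fintype_card, Finset.card_eq_iff_eq_univ,
    Finset.eq_univ_iff_forall]
  simp only [Finset.mem_biUnion, Sym2.mem_toFinset]

end IsMatchingSet

section Counting

variable (G : SimpleGraph V)

theorem numMatchings_zero : numMatchings G 0 = 1 := by
  rw [numMatchings_eq_ncard, ← Set.ncard_singleton (∅ : Finset (Sym2 V))]
  congr
  ext M
  simp only [matchingsOfCard, Finset.card_eq_zero, Set.mem_ofPred_eq, Set.mem_singleton_iff,
    and_iff_left_iff_imp]
  rintro rfl
  exact isMatchingSet_empty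

variable [Finite V]

theorem numMatchings_eq_zero {r : ℕ} (hr : Nat.card V < 2 * r) : numMatchings G r = 0 := by
  rw [numMatchings_eq_ncard, Set.ncard_eq_zero, Set.eq_empty_iff_forall_notMem]
  rintro M ⟨rfl, hM⟩
  exact absurd hM.two_mul_card_le (not_le.2 hr)

theorem numMatchings_pos_iff {r : ℕ} :
    0 < numMatchings G r ↔ ∃ M : Finset (Sym2 V), M.card = r ∧ IsMatchingSet G M :=
  Set.ncard_pos

theorem exists_isPerfectMatching_iff :
    (∃ M : G.Subgraph, M.IsPerfectMatching) ↔
      ∃ F : Finset (Sym2 V), IsMatchingSet G F ∧ ∀ v, ∃ e ∈ F, v ∈ e := by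
  constructor
  · rintro ⟨M, hM⟩
    have hmem (e : Sym2 V) : e ∈ M.edgeSet.toFinite.toFinset ↔ e ∈ M.edgeSet :=
      Set.Finite.mem_toFinset _
    refine ⟨M.edgeSet.toFinite.toFinset, ⟨fun e he => M.edgeSet_subset ((hmem e).1 he), ?_⟩,
      fun v => ?_⟩
    · intro e he f hf hef v hve hvf
      obtain ⟨a, rfl⟩ := Sym2.mem_iff_exists.1 hve
      obtain ⟨b, rfl⟩ := Sym2.mem_iff_exists.1 hvf
      have hab := hM.1.eq_of_adj_left (SimpleGraph.Subgraph.mem_edgeSet.1 ((hmem _).1 he))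
        (SimpleGraph.Subgraph.mem_edgeSet.1 ((hmem _).1 hf))
      exact hef (by rw [hab])
    · obtain ⟨w, hvw, -⟩ := SimpleGraph.Subgraph.isPerfectMatching_iff.1 hM v
      exact ⟨s(v, w), (hmem _).2 hvw, Sym2.mem_mk_left v w⟩
  · rintro ⟨F, hF, hcover⟩
    have hle : SimpleGraph.fromEdgeSet (F : Set (Sym2 V)) ≤ G := by
      rw [SimpleGraph.fromEdgeSet_le]
      exact Set.sdiff_subset.trans hF.1
    refine ⟨G.toSubgraph _ hle, SimpleGraph.Subgraph.isPerfectMatching_iff.2 fun v => ?_⟩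
    simp only [SimpleGraph.toSubgraph_adj, SimpleGraph.fromEdgeSet_adj, Finset.mem_coe]
    obtain ⟨e, he, hve⟩ := hcover v
    obtain ⟨w, rfl⟩ := Sym2.mem_iff_exists.1 hve
    refine ⟨w, ⟨he, (G.mem_edgeSet.1 (hF.1 he)).ne⟩, fun x hx => ?_⟩
    exact Sym2.congr_right.1 (hF.eq_of_mem hx.1 he (Sym2.mem_mk_left v x) (Sym2.mem_mk_left v w))

theorem numMatchings_pos_iff_exists_isPerfectMatching {k : ℕ} (hk : Nat.card V = 2 * k) :
    0 < numMatchings G k ↔ ∃ M : G.Subgraph, M.IsPerfectMatching := by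
  rw [numMatchings_pos_iff, exists_isPerfectMatching_iff]
  refine exists_congr fun F => ⟨fun ⟨hcard, hF⟩ => ⟨hF, hF.two_mul_card_eq_iff.1 (by omega)⟩,
    fun ⟨hF, hcover⟩ => ⟨?_, hF⟩⟩
  have := hF.two_mul_card_eq_iff.2 hcover
  omega

end Counting

section Embedding

variable {W : Type*} {G : SimpleGraph V} {H : SimpleGraph W}

theorem isMatchingSet_map_iff (f : H ↪g G) {N : Finset (Sym2 W)} :
    IsMatchingSet G (N.map f.toEmbedding.sym2Map) ↔ IsMatchingSet H N := by
  have hdisj (e e' : Sym2 W) :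
      (∀ x, x ∈ Sym2.map f e → x ∉ Sym2.map f e') ↔ ∀ a, a ∈ e → a ∉ e' := by
    refine ⟨fun h a ha ha' => h (f a) (Sym2.mem_map.2 ⟨a, ha, rfl⟩) (Sym2.mem_map.2 ⟨a, ha', rfl⟩),
      fun h x hx hx' => ?_⟩
    obtain ⟨a, ha, rfl⟩ := Sym2.mem_map.1 hx
    obtain ⟨b, hb, hab⟩ := Sym2.mem_map.1 hx'
    exact h a ha (f.injective hab ▸ hb)
  simp only [IsMatchingSet, Finset.coe_map, Set.image_subset_iff,
    (f.toEmbedding.sym2Map.injective.injOn).pairwise_image]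
  exact and_congr (forall₂_congr fun e _ => f.map_mem_edgeSet_iff)
    ⟨fun h => h.imp fun e e' => (hdisj e e').1, fun h => h.imp fun e e' => (hdisj e e').2⟩

theorem numMatchings_of_embedding (f : H ↪g G) (r : ℕ) :
    numMatchings H r =
      {M ∈ matchingsOfCard G r | ∀ e ∈ M, ∀ x ∈ e, x ∈ Set.range f}.ncard := by
  classical
  set φ := f.toEmbedding.sym2Map
  rw [numMatchings_eq_ncard, ← (Finset.map_injective φ).injOn.ncard_image]
  congr
  ext M
  constructor
  · rintro ⟨N, ⟨rfl, hN⟩, rfl⟩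
    refine ⟨⟨Finset.card_map _, (isMatchingSet_map_iff f).2 hN⟩, fun e he x hx => ?_⟩
    obtain ⟨e', -, rfl⟩ := Finset.mem_map.1 he
    obtain ⟨a, -, rfl⟩ := Sym2.mem_map.1 hx
    exact ⟨a, rfl⟩
  · rintro ⟨⟨rfl, hM⟩, hrange⟩
    have hsub : (M : Set (Sym2 V)) ⊆ φ '' Set.univ := by
      intro e he
      induction e with
      | h a b =>
        obtain ⟨a', rfl⟩ := hrange _ he a (Sym2.mem_mk_left a b)
        obtain ⟨b', rfl⟩ := hrange _ he b (Sym2.mem_mk_right _ b)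
        exact ⟨s(a', b'), trivial, rfl⟩
    obtain ⟨N, -, rfl⟩ := Finset.subset_set_image_iff.1 hsub
    rw [← Finset.map_eq_image] at hM ⊢
    exact ⟨N, ⟨(Finset.card_map φ).symm, (isMatchingSet_map_iff f).1 hM⟩, rfl⟩

end Embedding

theorem numMatchings_deleteVert (G : SimpleGraph V) (v : V) (r : ℕ) :
    numMatchings (deleteVert G v) r = {M ∈ matchingsOfCard G r | ∀ e ∈ M, v ∉ e}.ncard := by
  rw [deleteVert, numMatchings_of_embedding (SimpleGraph.Embedding.induce _)]
  congr
  ext M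
  have hrange : Set.range (SimpleGraph.Embedding.induce (G := G) {v}ᶜ) = {v}ᶜ :=
    Subtype.range_coe
  simp only [hrange, Set.mem_compl_iff, Set.mem_singleton_iff]
  exact and_congr_right fun _ => forall₂_congr fun e _ =>
    ⟨fun h hv => h v hv rfl, fun h x hx hxv => h (hxv ▸ hx)⟩

section Polynomial

variable (G : SimpleGraph V)

theorem matchingPoly_eq_one_of_card_eq_zero (h : Nat.card V = 0) : matchingPoly G = 1 := by
  simp [matchingPoly, h, numMatchings_zero]

variable [Finite V]

theorem coeff_matchingPoly (j : ℕ) :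
    (matchingPoly G).coeff j = ∑ r ∈ Finset.range (Nat.card V + 1),
      if j + 2 * r = Nat.card V then (-1 : ℝ) ^ r * numMatchings G r else 0 := by
  rw [matchingPoly, finsetSum_coeff]
  refine Finset.sum_congr rfl fun r _ => ?_
  rw [coeff_C_mul, coeff_X_pow]
  by_cases hr : 2 * r ≤ Nat.card V
  · simp only [show j = Nat.card V - 2 * r ↔ j + 2 * r = Nat.card V by omega]
    split_ifs <;> simp
  · simp [numMatchings_eq_zero G (not_le.1 hr)]

theorem coeff_matchingPoly_of_add_eq {j r : ℕ} (h : j + 2 * r = Nat.card V) :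
    (matchingPoly G).coeff j = (-1) ^ r * numMatchings G r := by
  rw [coeff_matchingPoly, Finset.sum_eq_single r]
  · rw [if_pos h]
  · intro s _ hs
    rw [if_neg (by omega)]
  · intro hr
    exact absurd (Finset.mem_range.2 (by omega)) hr

theorem coeff_matchingPoly_eq_zero {j : ℕ} (h : ∀ r, j + 2 * r ≠ Nat.card V) :
    (matchingPoly G).coeff j = 0 :=
  (coeff_matchingPoly G j).trans (Finset.sum_eq_zero fun r _ => if_neg (h r))

theorem matchingPoly_ne_zero : matchingPoly G ≠ 0 := by
  intro h
  have := coeff_matchingPoly_of_add_eq G (j := Nat.card V) (r := 0) rfl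
  simp [h, numMatchings_zero] at this

theorem X_pow_mul_matchingPoly (k N : ℕ) (hN : Nat.card V < 2 * N) :
    X ^ k * matchingPoly G = ∑ r ∈ Finset.range N,
      C ((-1 : ℝ) ^ r * numMatchings G r) * X ^ (Nat.card V + k - 2 * r) := by
  set g : ℕ → ℝ[X] := fun r => C ((-1 : ℝ) ^ r * numMatchings G r) * X ^ (Nat.card V + k - 2 * r)
  have htrunc (A : ℕ) (hA : Nat.card V < 2 * A) :
      ∑ r ∈ Finset.range (Nat.card V / 2 + 1), g r = ∑ r ∈ Finset.range A, g r := by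
    refine Finset.sum_subset (Finset.range_subset_range.2 (by omega)) fun r _ hr => ?_
    rw [Finset.mem_range] at hr
    simp [g, numMatchings_eq_zero G (show Nat.card V < 2 * r by omega)]
  rw [← htrunc N hN, htrunc (Nat.card V + 1) (by omega), matchingPoly, Finset.mul_sum]
  refine Finset.sum_congr rfl fun r _ => ?_
  by_cases hr : 2 * r ≤ Nat.card V
  · rw [mul_left_comm, ← pow_add, show k + (Nat.card V - 2 * r) = Nat.card V + k - 2 * r by omega]
  · simp [g, numMatchings_eq_zero G (not_le.1 hr)]

end Polynomial

section Leaf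

variable {G : SimpleGraph V} {u w : V}

theorem edge_eq_of_leaf (hleaf : ∀ x, G.Adj u x → x = w) {e : Sym2 V} (he : e ∈ G.edgeSet)
    (hue : u ∈ e) : e = s(u, w) := by
  obtain ⟨y, rfl⟩ := Sym2.mem_iff_exists.1 hue
  rw [hleaf y (G.mem_edgeSet.1 he)]

variable [Finite V]

theorem numMatchings_succ_of_leaf (huw : G.Adj u w) (hleaf : ∀ x, G.Adj u x → x = w) (r : ℕ) :
    numMatchings G (r + 1) =
      numMatchings (deleteVert G u) (r + 1) + numMatchings (deleteVert G w) r := by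
  classical
  -- a matching avoids `u` unless it contains `s(u, w)`, and then removing that edge is a bijection
  -- onto the matchings avoiding `w`
  rw [numMatchings_deleteVert, numMatchings_deleteVert, numMatchings_eq_ncard,
    ← Set.ncard_inter_add_ncard_sdiff_eq_ncard _ {M | s(u, w) ∈ M}, add_comm]
  congr 1
  · congr 1
    ext M
    simp only [Set.mem_sdiff, Set.mem_ofPred_eq]
    refine and_congr_right fun hM =>
      ⟨fun h e he hue => h ?_, fun h huw => h _ huw (Sym2.mem_mk_left u w)⟩
    rwa [← edge_eq_of_leaf hleaf (hM.2.1 he) hue]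
  · have hnot {M : Finset (Sym2 V)} (hM : ∀ e ∈ M, w ∉ e) : s(u, w) ∉ M :=
      fun h => hM _ h (Sym2.mem_mk_right u w)
    have hinj : Set.InjOn (insert s(u, w)) {M | M ∈ matchingsOfCard G r ∧ ∀ e ∈ M, w ∉ e} :=
      fun M hM N hN h => by
        rw [← Finset.erase_insert (hnot hM.2), h, Finset.erase_insert (hnot hN.2)]
    rw [← hinj.ncard_image]
    congr 1
    ext M
    constructor
    · rintro ⟨⟨hcard, hM⟩, hmem⟩
      refine ⟨M.erase s(u, w), ⟨⟨by rw [Finset.card_erase_of_mem hmem, hcard]; rfl,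
        hM.subset (Finset.erase_subset _ _)⟩, fun e he hwe => ?_⟩, Finset.insert_erase hmem⟩
      exact Finset.ne_of_mem_erase he
        (hM.eq_of_mem (Finset.mem_of_mem_erase he) hmem hwe (Sym2.mem_mk_right u w))
    · rintro ⟨N, ⟨⟨rfl, hN⟩, hw⟩, rfl⟩
      refine ⟨⟨Finset.card_insert_of_notMem (hnot hw), hN.insert huw fun f hf v hv => ?_⟩,
        Finset.mem_insert_self _ _⟩
      rcases Sym2.mem_iff.1 hv with rfl | rfl
      · exact fun hvf => hw f hf (edge_eq_of_leaf hleaf (hN.1 hf) hvf ▸ Sym2.mem_mk_right v w)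
      · exact hw f hf

/-- The usual recurrence `μ(G) = x μ(G\u) - μ(G\{u,w})` multiplied by `x`, using
`μ(G\w) = x μ(G\{u,w})`; in this form it avoids truncated subtraction in the exponents. -/
theorem matchingPoly_of_leaf (huw : G.Adj u w) (hleaf : ∀ x, G.Adj u x → x = w) :
    X * matchingPoly G + matchingPoly (deleteVert G w) =
      X ^ 2 * matchingPoly (deleteVert G u) := by
  obtain ⟨m, hu⟩ : ∃ m, Nat.card ↥({u}ᶜ : Set V) = m := ⟨_, rfl⟩
  have hV : Nat.card V = m + 1 := hu ▸ (card_compl_singleton_add_one u).symm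
  have hw : Nat.card ↥({w}ᶜ : Set V) = m := by
    have := card_compl_singleton_add_one w
    omega
  have h1 := X_pow_mul_matchingPoly G 1 (m + 2) (by omega)
  have h0 := X_pow_mul_matchingPoly (deleteVert G w) 0 (m + 1) (by omega)
  have h2 := X_pow_mul_matchingPoly (deleteVert G u) 2 (m + 2) (by omega)
  rw [pow_one, Finset.sum_range_succ'] at h1
  rw [pow_zero, one_mul] at h0
  rw [Finset.sum_range_succ'] at h2
  rw [h1, h0, h2, add_right_comm, ← Finset.sum_add_distrib, hV, hw, hu]
  congr 1
  · refine Finset.sum_congr rfl fun r _ => ?_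
    rw [show m + 1 + 1 - 2 * (r + 1) = m - 2 * r by omega, show m + 0 - 2 * r = m - 2 * r by omega,
      ← add_mul, ← C_add, numMatchings_succ_of_leaf huw hleaf]
    congr 2
    push_cast
    ring
  · simp [numMatchings_zero]

end Leaf

section Multiplicity

variable (G : SimpleGraph V) [Finite V]

theorem mult_eq_zero_iff (θ : ℝ) : mult θ G = 0 ↔ (matchingPoly G).eval θ ≠ 0 := by
  rw [mult, rootMultiplicity_eq_zero_iff]
  exact ⟨fun h hroot => matchingPoly_ne_zero G (h hroot), fun h hroot => absurd hroot h⟩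

theorem eval_matchingPoly_eq_zero_of_mult_ne_zero {θ : ℝ} (h : mult θ G ≠ 0) :
    (matchingPoly G).eval θ = 0 :=
  not_not.1 (mt (mult_eq_zero_iff G θ).2 h)

theorem mult_zero_eq_one (h0 : (matchingPoly G).coeff 0 = 0)
    (h1 : (matchingPoly G).coeff 1 ≠ 0) : mult 0 G = 1 := by
  rw [mult, rootMultiplicity_eq_natTrailingDegree']
  exact le_antisymm (natTrailingDegree_le_of_ne_zero h1)
    (Nat.one_le_iff_ne_zero.2 (natTrailingDegree_ne_zero.2 ⟨matchingPoly_ne_zero G, h0⟩))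

theorem mult_zero_eq_zero_iff : mult 0 G = 0 ↔ ∃ M : G.Subgraph, M.IsPerfectMatching := by
  rw [mult_eq_zero_iff, ← coeff_zero_eq_eval_zero]
  obtain ⟨k, hk | hk⟩ := Nat.even_or_odd' (Nat.card V)
  · rw [coeff_matchingPoly_of_add_eq G (j := 0) (r := k) (by omega),
      ← numMatchings_pos_iff_exists_isPerfectMatching G hk]
    simp [Nat.pos_iff_ne_zero]
  · rw [coeff_matchingPoly_eq_zero G fun r => by omega, exists_isPerfectMatching_iff]
    simp only [ne_eq, not_true_eq_false, false_iff, not_exists, not_and]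
    intro F hF hcover
    have := hF.two_mul_card_eq_iff.2 hcover
    omega

variable {G}

theorem mult_zero_deleteVert_eq_one {M : G.Subgraph} (hM : M.IsPerfectMatching) (v : V) :
    mult 0 (deleteVert G v) = 1 := by
  classical
  obtain ⟨F, hF, hcover⟩ := (exists_isPerfectMatching_iff G).1 ⟨M, hM⟩
  obtain ⟨e, he, hve⟩ := hcover v
  have hcard : Nat.card ↥({v}ᶜ : Set V) = 1 + 2 * (F.card - 1) := by
    have := hF.two_mul_card_eq_iff.2 hcover
    have := card_compl_singleton_add_one v
    have := Finset.card_pos.2 ⟨e, he⟩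
    omega
  have hpos : 0 < numMatchings (deleteVert G v) (F.card - 1) := by
    rw [numMatchings_deleteVert, Set.ncard_pos]
    exact ⟨F.erase e, ⟨Finset.card_erase_of_mem he, hF.subset (Finset.erase_subset _ _)⟩,
      fun f hf hvf => Finset.ne_of_mem_erase hf
        (hF.eq_of_mem (Finset.mem_of_mem_erase hf) he hvf hve)⟩
  apply mult_zero_eq_one
  · exact coeff_matchingPoly_eq_zero _ fun r => by omega
  · rw [coeff_matchingPoly_of_add_eq _ hcard.symm]
    simp [hpos.ne']

end Multiplicity

section SuperPositive

variable {G : SimpleGraph V} [Finite V]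

theorem isSuperPositive_zero_iff :
    IsSuperPositive 0 G ↔ ∃ M : G.Subgraph, M.IsPerfectMatching :=
  ⟨fun h => (mult_zero_eq_zero_iff G).1 h.1, fun ⟨M, hM⟩ =>
    ⟨(mult_zero_eq_zero_iff G).2 ⟨M, hM⟩, mult_zero_deleteVert_eq_one hM⟩⟩

theorem IsSuperPositive.nontrivial [Nonempty V] {θ : ℝ} (h : IsSuperPositive θ G) :
    Nontrivial V := by
  obtain ⟨v⟩ := ‹Nonempty V›
  by_contra hV
  have : Subsingleton V := not_nontrivial_iff_subsingleton.1 hV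
  have hempty : Nat.card ↥({v}ᶜ : Set V) = 0 :=
    Nat.card_eq_zero.2 (Or.inl ⟨fun x => x.2 (Subsingleton.elim _ _)⟩)
  have hmult := (mult_eq_zero_iff (deleteVert G v) θ).2
    (by simp [matchingPoly_eq_one_of_card_eq_zero _ hempty])
  rw [h.2 v] at hmult
  exact one_ne_zero hmult

theorem IsSuperPositive.eq_zero_of_leaf {θ : ℝ} (h : IsSuperPositive θ G) {u w : V}
    (huw : G.Adj u w) (hleaf : ∀ x, G.Adj u x → x = w) : θ = 0 := by
  have hrec := congrArg (eval θ) (matchingPoly_of_leaf huw hleaf)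
  simp only [eval_add, eval_mul, eval_X, eval_pow,
    eval_matchingPoly_eq_zero_of_mult_ne_zero _ (h.2 u ▸ one_ne_zero),
    eval_matchingPoly_eq_zero_of_mult_ne_zero _ (h.2 w ▸ one_ne_zero), mul_zero, add_zero] at hrec
  exact (mul_eq_zero.1 hrec).resolve_right ((mult_eq_zero_iff G θ).1 h.1)

end SuperPositive

/-- A tree is θ-super positive iff θ = 0 and it has a perfect matching. -/
theorem stmt_1 {V : Type*} [Fintype V] (θ : ℝ) (T : SimpleGraph V) (hT : T.IsTree) :
    IsSuperPositive θ T ↔ θ = 0 ∧ ∃ M : T.Subgraph, M.IsPerfectMatching := by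
  classical
  refine ⟨fun h => ?_, fun ⟨hθ, hM⟩ => hθ ▸ isSuperPositive_zero_iff.2 hM⟩
  have := hT.connected.nonempty
  have := h.nontrivial
  obtain ⟨u, hu⟩ := hT.exists_vert_degree_one_of_nontrivial
  obtain ⟨w, huw, hleaf⟩ := SimpleGraph.degree_eq_one_iff_existsUnique_adj.1 hu
  obtain rfl := h.eq_zero_of_leaf huw hleaf
  exact ⟨rfl, isSuperPositive_zero_iff.1 h⟩

end MatchPoly
end

section
/- Let G be a θ-super positive graph, where θ is a real number. Then for every vertex v of G, the graph G\v has no θ-neutral vertex, i.e., N_θ(G\v)=∅. -/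
/-!
Write `μ(S)` for the matching polynomial of the subgraph induced on a vertex set `S`. Expanding
along a vertex gives `μ(S) = x μ(S - u) - ∑_{w ~ u} μ(S - u - w)`, and from this, by induction
on `S`, the inequality `μ(S) μ(S - u - v) ≤ μ(S - u) μ(S - v)` at every real `x`.
If `G` is θ-super positive and `u` is a θ-neutral vertex of `G \ v`, then `θ` is a root of
multiplicity `0` of `μ(G)` and of multiplicity `1` of `μ(G - u)`, `μ(G - v)` and `μ(G - u - v)`.
So `θ` is a simple root of the nonnegative polynomial `μ(G - u) μ(G - v) - μ(G) μ(G - u - v)`,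
which is impossible: a real polynomial changes sign at a simple root.
-/

open Polynomial

namespace MatchPoly

variable {V : Type*}

open Finset

open Filter Topology in
theorem sq_dvd_of_dvd_of_forall_eval_nonneg {f : ℝ[X]} {θ : ℝ} (hf : ∀ x, 0 ≤ f.eval x)
    (hθ : X - C θ ∣ f) : (X - C θ) ^ 2 ∣ f := by
  obtain ⟨g, rfl⟩ := hθ
  rw [pow_two]
  refine mul_dvd_mul_left _ (dvd_iff_isRoot.2 ?_)
  have hsign : ∀ x, 0 ≤ (x - θ) * g.eval x := by simpa using hf
  have hg : Tendsto g.eval (𝓝 θ) (𝓝 (g.eval θ)) := g.continuous.tendsto θ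
  have hright : 0 ≤ g.eval θ :=
    ge_of_tendsto (hg.mono_left nhdsWithin_le_nhds) <| eventually_nhdsWithin_of_forall
      fun x (hx : x ∈ Set.Ioi θ) => nonneg_of_mul_nonneg_right (hsign x) (sub_pos.2 hx)
  have hleft : g.eval θ ≤ 0 :=
    le_of_tendsto (hg.mono_left nhdsWithin_le_nhds) <| eventually_nhdsWithin_of_forall
      fun x (hx : x ∈ Set.Iio θ) => nonpos_of_mul_nonneg_right (hsign x) (sub_neg.2 hx)
  exact le_antisymm hleft hright

theorem rootMultiplicity_ne_one_of_eval_mul_le {A B P Q : ℝ[X]} {θ : ℝ}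
    (hle : ∀ x, (P * Q).eval x ≤ (A * B).eval x) (hA : A.IsRoot θ) (hB : B.IsRoot θ)
    (hP : ¬ P.IsRoot θ) : Q.rootMultiplicity θ ≠ 1 := by
  intro hQ
  have hPQ0 : P * Q ≠ 0 := mul_ne_zero (by rintro rfl; simp at hP) (by rintro rfl; simp at hQ)
  have hAB : (X - C θ) ^ 2 ∣ A * B :=
    pow_two (X - C θ) ▸ mul_dvd_mul (dvd_iff_isRoot.2 hA) (dvd_iff_isRoot.2 hB)
  have hPQ : X - C θ ∣ P * Q :=
    dvd_mul_of_dvd_right (by simpa [hQ] using pow_rootMultiplicity_dvd Q θ) P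
  have hdiff : (X - C θ) ^ 2 ∣ A * B - P * Q :=
    sq_dvd_of_dvd_of_forall_eval_nonneg (fun x => by simpa using hle x)
      (dvd_sub ((dvd_pow_self _ two_ne_zero).trans hAB) hPQ)
  have h2 : 2 ≤ (P * Q).rootMultiplicity θ :=
    (le_rootMultiplicity_iff hPQ0).2 (by simpa using dvd_sub hAB hdiff)
  rw [rootMultiplicity_mul hPQ0, rootMultiplicity_eq_zero hP, hQ] at h2
  omega

/-- Matchings of the induced subgraphs of `G` are handled as matchings of `G` itself, so that
vertex deletion is just `Finset.erase`. -/
structure IsMatchingOn (G : SimpleGraph V) (S : Finset V) (M : Finset (Sym2 V)) : Prop where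
  subset_edgeSet : (M : Set (Sym2 V)) ⊆ G.edgeSet
  mem_of_mem : ∀ e ∈ M, ∀ x ∈ e, x ∈ S
  pairwise : (M : Set (Sym2 V)).Pairwise fun e f => ∀ x : V, x ∈ e → x ∉ f

noncomputable def numMatchingsOn (G : SimpleGraph V) (S : Finset V) (r : ℕ) : ℕ :=
  Nat.card {M : Finset (Sym2 V) // M.card = r ∧ IsMatchingOn G S M}

noncomputable def matchingPolyOn (G : SimpleGraph V) (S : Finset V) : ℝ[X] :=
  ∑ r ∈ range (S.card + 1), C ((-1 : ℝ) ^ r * numMatchingsOn G S r) * X ^ (S.card - 2 * r)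

section MatchingsOn

variable {G : SimpleGraph V} {S : Finset V} {M N : Finset (Sym2 V)} {u w : V}

open Classical in
theorem numMatchingsOn_eq_card [Fintype V] (r : ℕ) :
    numMatchingsOn G S r = #{M : Finset (Sym2 V) | M.card = r ∧ IsMatchingOn G S M} := by
  rw [numMatchingsOn, Nat.card_eq_fintype_card]
  convert Fintype.card_subtype _

theorem isMatchingOn_empty : IsMatchingOn G S ∅ :=
  ⟨by simp, by simp, by simp⟩

theorem numMatchingsOn_zero : numMatchingsOn G S 0 = 1 := by
  rw [numMatchingsOn, Nat.card_eq_one_iff_unique]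
  exact ⟨⟨fun M N => Subtype.ext (by rw [card_eq_zero.1 M.2.1, card_eq_zero.1 N.2.1])⟩,
    ⟨⟨∅, rfl, isMatchingOn_empty⟩⟩⟩

theorem matchingPolyOn_ne_zero : matchingPolyOn G S ≠ 0 := by
  refine fun h => one_ne_zero (α := ℝ) ?_
  rw [← coeff_zero S.card, ← h, matchingPolyOn, finsetSum_coeff,
    sum_eq_single_of_mem 0 (mem_range.2 S.card.succ_pos)]
  · simp [numMatchingsOn_zero]
  · intro r hr hr0
    rw [mem_range] at hr
    rw [coeff_C_mul, coeff_X_pow, if_neg (by omega), mul_zero]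

variable [DecidableEq V]

theorem IsMatchingOn.two_mul_card_le (h : IsMatchingOn G S M) : 2 * M.card ≤ S.card :=
  calc 2 * M.card = ∑ e ∈ M, e.toFinset.card := by
        rw [mul_comm, ← smul_eq_mul, ← sum_const]
        exact sum_congr rfl fun e he => (Sym2.card_toFinset_of_not_isDiag e
          (G.not_isDiag_of_mem_edgeSet (h.subset_edgeSet he))).symm
    _ = (M.biUnion Sym2.toFinset).card := by
        refine (card_biUnion fun e he f hf hef => disjoint_left.2 fun x hxe hxf => ?_).symm
        exact h.pairwise he hf hef x (Sym2.mem_toFinset.1 hxe) (Sym2.mem_toFinset.1 hxf)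
    _ ≤ S.card := card_le_card fun x hx => by
        obtain ⟨e, he, hxe⟩ := mem_biUnion.1 hx
        exact h.mem_of_mem e he x (Sym2.mem_toFinset.1 hxe)

theorem numMatchingsOn_eq_zero {r : ℕ} (h : S.card < 2 * r) : numMatchingsOn G S r = 0 :=
  Nat.card_eq_zero.2 <| Or.inl ⟨fun M => by have := M.2.2.two_mul_card_le; omega⟩

theorem isMatchingOn_erase_iff :
    IsMatchingOn G (S.erase u) M ↔ IsMatchingOn G S M ∧ ∀ e ∈ M, u ∉ e := by
  constructor
  · intro h
    refine ⟨⟨h.subset_edgeSet, fun e he x hx => mem_of_mem_erase (h.mem_of_mem e he x hx),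
      h.pairwise⟩, fun e he hu => notMem_erase u S (h.mem_of_mem e he u hu)⟩
  · rintro ⟨h, hu⟩
    exact ⟨h.subset_edgeSet, fun e he x hx =>
      mem_erase.2 ⟨fun hxu => hu e he (hxu ▸ hx), h.mem_of_mem e he x hx⟩, h.pairwise⟩

theorem IsMatchingOn.erase_edge (h : IsMatchingOn G S M) (he : s(u, w) ∈ M) :
    IsMatchingOn G ((S.erase u).erase w) (M.erase s(u, w)) := by
  have hsub : IsMatchingOn G S (M.erase s(u, w)) :=
    ⟨(coe_subset.2 (erase_subset _ _)).trans h.subset_edgeSet,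
      fun e he' => h.mem_of_mem e (mem_of_mem_erase he'),
      h.pairwise.mono (coe_subset.2 (erase_subset _ _))⟩
  have hfree (x : V) (hx : x ∈ s(u, w)) : ∀ e ∈ M.erase s(u, w), x ∉ e := fun e he' hxe =>
    h.pairwise (mem_of_mem_erase he') he (ne_of_mem_erase he') x hxe hx
  exact isMatchingOn_erase_iff.2 ⟨isMatchingOn_erase_iff.2 ⟨hsub, hfree u (Sym2.mem_mk_left u w)⟩,
    hfree w (Sym2.mem_mk_right u w)⟩

theorem IsMatchingOn.insert_edge (h : IsMatchingOn G ((S.erase u).erase w) N) (hu : u ∈ S)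
    (hw : w ∈ S) (hadj : G.Adj u w) : IsMatchingOn G S (insert s(u, w) N) := by
  obtain ⟨⟨hN, huN⟩, hwN⟩ := isMatchingOn_erase_iff.1 h |>.imp_left isMatchingOn_erase_iff.1
  have hfree (x : V) (hx : x ∈ s(u, w)) (e : Sym2 V) (he : e ∈ N) : x ∉ e := by
    rcases Sym2.mem_iff.1 hx with rfl | rfl
    exacts [huN e he, hwN e he]
  refine ⟨?_, fun e he x hx => ?_, ?_⟩
  · rw [coe_insert, Set.insert_subset_iff]
    exact ⟨hadj, hN.subset_edgeSet⟩
  · rcases mem_insert.1 he with rfl | he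
    · rcases Sym2.mem_iff.1 hx with rfl | rfl
      exacts [hu, hw]
    · exact hN.mem_of_mem e he x hx
  · rw [coe_insert]
    refine hN.pairwise.insert fun e he _ => ⟨fun x hx => hfree x hx e he, fun x hx hx' => ?_⟩
    exact hfree x hx' e he hx

theorem IsMatchingOn.edge_notMem (h : IsMatchingOn G ((S.erase u).erase w) N) : s(u, w) ∉ N :=
  fun hin => by simpa using h.mem_of_mem _ hin u (Sym2.mem_mk_left u w)

theorem IsMatchingOn.exists_mem_iff [DecidableRel G.Adj] (h : IsMatchingOn G S M) :
    (∃ e ∈ M, u ∈ e) ↔ ∃ w ∈ (S.erase u).filter (G.Adj u), s(u, w) ∈ M := by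
  constructor
  · rintro ⟨e, he, hue⟩
    have hw : s(u, Sym2.Mem.other hue) ∈ M := (Sym2.other_spec hue).symm ▸ he
    have hadj : G.Adj u (Sym2.Mem.other hue) := G.mem_edgeSet.1 (h.subset_edgeSet hw)
    exact ⟨_, mem_filter.2 ⟨mem_erase.2 ⟨hadj.ne', h.mem_of_mem _ hw _ (Sym2.mem_mk_right _ _)⟩,
      hadj⟩, hw⟩
  · rintro ⟨w, -, hw⟩
    exact ⟨_, hw, Sym2.mem_mk_left u w⟩

theorem IsMatchingOn.eq_of_mem_of_mem (h : IsMatchingOn G S M) {w w' : V} (hw : s(u, w) ∈ M)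
    (hw' : s(u, w') ∈ M) : w = w' := by
  by_contra hne
  exact h.pairwise hw hw' (fun h' => hne (Sym2.congr_right.1 h')) u (Sym2.mem_mk_left u w)
    (Sym2.mem_mk_left u w')

open Classical in
theorem card_isMatchingOn_mem_edge [Fintype V] (hu : u ∈ S) (hw : w ∈ S) (hadj : G.Adj u w)
    (r : ℕ) : #{M : Finset (Sym2 V) | M.card = r + 1 ∧ IsMatchingOn G S M ∧ s(u, w) ∈ M} =
      numMatchingsOn G ((S.erase u).erase w) r := by
  rw [numMatchingsOn_eq_card]
  refine card_nbij' (fun M => M.erase s(u, w)) (fun N => insert s(u, w) N) ?_ ?_ ?_ ?_ <;>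
    intro M <;> simp only [coe_filter, mem_univ, true_and, Set.mem_ofPred_eq]
  · rintro ⟨hc, hM, hin⟩
    exact ⟨by rw [card_erase_of_mem hin, hc]; rfl, hM.erase_edge hin⟩
  · rintro ⟨hc, hM⟩
    exact ⟨by rw [card_insert_of_notMem hM.edge_notMem, hc], hM.insert_edge hu hw hadj,
      mem_insert_self _ _⟩
  · exact fun hM => insert_erase hM.2.2
  · exact fun hM => erase_insert hM.2.edge_notMem

theorem numMatchingsOn_succ [Fintype V] [DecidableRel G.Adj] (hu : u ∈ S) (r : ℕ) :
    numMatchingsOn G S (r + 1) = numMatchingsOn G (S.erase u) (r + 1) +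
      ∑ w ∈ (S.erase u).filter (G.Adj u), numMatchingsOn G ((S.erase u).erase w) r := by
  classical
  rw [numMatchingsOn_eq_card, ← card_filter_add_card_filter_not (fun M => ∀ e ∈ M, u ∉ e),
    filter_filter, filter_filter, numMatchingsOn_eq_card]
  congr 1
  · simp only [isMatchingOn_erase_iff, and_assoc]
  · have hcover : ({M : Finset (Sym2 V) | (M.card = r + 1 ∧ IsMatchingOn G S M) ∧
        ¬ ∀ e ∈ M, u ∉ e} : Finset _) = ((S.erase u).filter (G.Adj u)).biUnion
          fun w => {M | M.card = r + 1 ∧ IsMatchingOn G S M ∧ s(u, w) ∈ M} := by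
      ext M
      simp only [mem_filter, mem_univ, true_and, mem_biUnion, not_forall, not_not, exists_prop]
      constructor
      · rintro ⟨⟨hc, hM⟩, hcov⟩
        obtain ⟨w, hw, hin⟩ := hM.exists_mem_iff.1 hcov
        exact ⟨w, mem_filter.1 hw, hc, hM, hin⟩
      · rintro ⟨w, hw, hc, hM, hin⟩
        exact ⟨⟨hc, hM⟩, hM.exists_mem_iff.2 ⟨w, mem_filter.2 hw, hin⟩⟩
    rw [hcover, card_biUnion]
    · refine sum_congr rfl fun w hw => ?_
      obtain ⟨hwS, hadj⟩ := mem_filter.1 hw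
      exact card_isMatchingOn_mem_edge hu (mem_of_mem_erase hwS) hadj r
    · intro w _ w' _ hne
      simp only [Function.onFun, disjoint_left, mem_filter, mem_univ, true_and]
      rintro M ⟨-, hM, hin⟩ ⟨-, -, hin'⟩
      exact hne (hM.eq_of_mem_of_mem hin hin')

theorem matchingPolyOn_eq_sum_range {n : ℕ} (h : S.card ≤ n) : matchingPolyOn G S =
    ∑ r ∈ range (n + 1), C ((-1 : ℝ) ^ r * numMatchingsOn G S r) * X ^ (S.card - 2 * r) := by
  refine sum_subset (range_subset_range.2 (by omega)) fun r hr hr' => ?_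
  rw [mem_range] at hr hr'
  rw [numMatchingsOn_eq_zero (by omega)]
  simp

theorem X_mul_matchingPolyOn_erase (hu : u ∈ S) : X * matchingPolyOn G (S.erase u) =
    ∑ r ∈ range (S.card + 1),
      C ((-1 : ℝ) ^ r * numMatchingsOn G (S.erase u) r) * X ^ (S.card - 2 * r) := by
  have hS : 0 < S.card := card_pos.2 ⟨u, hu⟩
  rw [matchingPolyOn_eq_sum_range (card_le_card (erase_subset u S)), mul_sum]
  refine sum_congr rfl fun r _ => ?_
  rw [card_erase_of_mem hu]
  by_cases hr : 2 * r < S.card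
  · rw [mul_left_comm, ← pow_succ']
    congr 2
    omega
  · rw [numMatchingsOn_eq_zero (by rw [card_erase_of_mem hu]; omega)]
    simp

theorem sum_matchingPolyOn_erase_erase [DecidableRel G.Adj] (hu : u ∈ S) :
    ∑ w ∈ (S.erase u).filter (G.Adj u), matchingPolyOn G ((S.erase u).erase w) =
      ∑ r ∈ range S.card, C ((-1 : ℝ) ^ r *
        ∑ w ∈ (S.erase u).filter (G.Adj u), (numMatchingsOn G ((S.erase u).erase w) r : ℝ)) *
          X ^ (S.card - 2 * (r + 1)) := by
  have hS : 0 < S.card := card_pos.2 ⟨u, hu⟩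
  have hsummand (w) (hw : w ∈ (S.erase u).filter (G.Adj u)) :
      matchingPolyOn G ((S.erase u).erase w) = ∑ r ∈ range S.card,
        C ((-1 : ℝ) ^ r * numMatchingsOn G ((S.erase u).erase w) r) *
          X ^ (S.card - 2 * (r + 1)) := by
    have hcard : ((S.erase u).erase w).card = S.card - 2 := by
      rw [card_erase_of_mem (mem_filter.1 hw).1, card_erase_of_mem hu]
      omega
    rw [matchingPolyOn_eq_sum_range (n := S.card - 1) (by omega), Nat.sub_add_cancel hS, hcard]
    refine sum_congr rfl fun r _ => ?_
    congr 2
    omega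
  rw [sum_congr rfl hsummand, sum_comm]
  refine sum_congr rfl fun r _ => ?_
  rw [← sum_mul, ← map_sum, ← mul_sum]

theorem matchingPolyOn_eq_X_mul_sub_sum [Fintype V] [DecidableRel G.Adj] (hu : u ∈ S) :
    matchingPolyOn G S = X * matchingPolyOn G (S.erase u) -
      ∑ w ∈ (S.erase u).filter (G.Adj u), matchingPolyOn G ((S.erase u).erase w) := by
  rw [eq_sub_iff_add_eq, X_mul_matchingPolyOn_erase hu, sum_matchingPolyOn_erase_erase hu,
    matchingPolyOn, sum_range_succ', sum_range_succ' _ S.card, add_right_comm,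
    ← sum_add_distrib]
  simp only [numMatchingsOn_zero]
  congr 1
  refine sum_congr rfl fun r _ => ?_
  rw [numMatchingsOn_succ hu, ← add_mul, ← map_add]
  congr 2
  push_cast
  ring

theorem eval_mul_eval_erase_erase_le [Fintype V] [DecidableRel G.Adj] (x : ℝ) {u v : V}
    (hu : u ∈ S) (hv : v ∈ S) (huv : u ≠ v) :
    (matchingPolyOn G S).eval x * (matchingPolyOn G ((S.erase u).erase v)).eval x ≤
      (matchingPolyOn G (S.erase u)).eval x * (matchingPolyOn G (S.erase v)).eval x := by
  induction S using Finset.strongInduction generalizing u v with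
  | H S ih =>
  set μ : Finset V → ℝ := fun T => (matchingPolyOn G T).eval x with hμ
  set E := S.erase u
  set D := E.erase v
  set W := E.filter (G.Adj u)
  have hvE : v ∈ E := mem_erase.2 ⟨huv.symm, hv⟩
  have hrecS : μ S = x * μ E - ∑ w ∈ W, μ (E.erase w) := by
    simp only [hμ, matchingPolyOn_eq_X_mul_sub_sum hu, eval_sub, eval_mul, eval_X, eval_finsetSum]
    rfl
  have hrecSv : μ (S.erase v) = x * μ D - ∑ w ∈ W.erase v, μ (D.erase w) := by
    have hu' : u ∈ S.erase v := mem_erase.2 ⟨huv, hu⟩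
    have hD : (S.erase v).erase u = D := erase_right_comm
    have hW : D.filter (G.Adj u) = W.erase v := filter_erase _ _ _
    simp only [hμ, matchingPolyOn_eq_X_mul_sub_sum hu', eval_sub, eval_mul, eval_X,
      eval_finsetSum, hD, hW]
  have key : μ E * μ (S.erase v) - μ S * μ D =
      ∑ w ∈ W.erase v, (μ (E.erase w) * μ D - μ E * μ (D.erase w)) +
        if v ∈ W then μ D ^ 2 else 0 := by
    rw [hrecS, hrecSv, sum_sub_distrib, ← sum_mul, ← mul_sum]
    split_ifs with hvW
    · rw [← add_sum_erase W _ hvW, show E.erase v = D from rfl]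
      ring
    · rw [erase_eq_of_notMem hvW]
      ring
  have hterm (w) (hw : w ∈ W.erase v) : μ E * μ (D.erase w) ≤ μ (E.erase w) * μ D := by
    have hwE : w ∈ E := (mem_filter.1 (mem_of_mem_erase hw)).1
    have := ih E (erase_ssubset hu) hwE hvE (ne_of_mem_erase hw)
    rwa [erase_right_comm] at this
  rw [← sub_nonneg, key]
  refine add_nonneg (sum_nonneg fun w hw => sub_nonneg.2 (hterm w hw)) ?_
  split_ifs <;> positivity

end MatchingsOn

section Embedding

variable {W : Type*} {G : SimpleGraph V} {H : SimpleGraph W}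

theorem isMatchingOn_map_iff [Fintype W] (φ : H ↪g G) (M : Finset (Sym2 W)) :
    IsMatchingOn G (univ.map φ.toEmbedding) (M.map φ.toEmbedding.sym2Map) ↔
      (M : Set (Sym2 W)) ⊆ H.edgeSet ∧
        (M : Set (Sym2 W)).Pairwise fun e f => ∀ a : W, a ∈ e → a ∉ f := by
  have hedge (e : Sym2 W) : φ.toEmbedding.sym2Map e ∈ G.edgeSet ↔ e ∈ H.edgeSet := by
    induction e using Sym2.ind
    simp
  have hdisj (e f : Sym2 W) :
      (∀ x : V, x ∈ φ.toEmbedding.sym2Map e → x ∉ φ.toEmbedding.sym2Map f) ↔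
        ∀ a : W, a ∈ e → a ∉ f := by
    simp only [Function.Embedding.sym2Map_apply, Sym2.mem_map]
    grind
  constructor
  · intro h
    exact ⟨fun e he => (hedge e).1 (h.subset_edgeSet (mem_map_of_mem _ he)),
      fun e he f hf hef => (hdisj e f).1 (h.pairwise (mem_map_of_mem _ he) (mem_map_of_mem _ hf)
        (φ.toEmbedding.sym2Map.injective.ne hef))⟩
  · rintro ⟨hsub, hpw⟩
    refine ⟨?_, ?_, ?_⟩
    · rw [coe_map, Set.image_subset_iff]
      exact fun e he => (hedge e).2 (hsub he)
    · intro e he x hx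
      obtain ⟨e, -, rfl⟩ := mem_map.1 he
      obtain ⟨a, -, rfl⟩ := Sym2.mem_map.1 hx
      exact mem_map_of_mem _ (mem_univ a)
    · rw [coe_map, φ.toEmbedding.sym2Map.injective.injOn.pairwise_image]
      exact hpw.imp fun e f => (hdisj e f).2

theorem exists_map_eq_of_isMatchingOn [Fintype W] (φ : H ↪g G) {N : Finset (Sym2 V)}
    (hN : IsMatchingOn G (univ.map φ.toEmbedding) N) :
    ∃ M : Finset (Sym2 W), M.map φ.toEmbedding.sym2Map = N := by
  suffices hN' : N ⊆ univ.map φ.toEmbedding.sym2Map by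
    obtain ⟨M, -, hM⟩ := subset_map_iff.1 hN'
    exact ⟨M, hM.symm⟩
  intro e he
  induction e using Sym2.ind with
  | _ x y =>
  obtain ⟨a, -, rfl⟩ := mem_map.1 (hN.mem_of_mem _ he x (Sym2.mem_mk_left x y))
  obtain ⟨b, -, rfl⟩ := mem_map.1 (hN.mem_of_mem _ he y (Sym2.mem_mk_right _ y))
  exact mem_map.2 ⟨s(a, b), mem_univ _, rfl⟩

theorem numMatchings_eq_numMatchingsOn [Fintype W] (φ : H ↪g G) (r : ℕ) :
    numMatchings H r = numMatchingsOn G (univ.map φ.toEmbedding) r := by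
  let f := φ.toEmbedding.sym2Map
  refine Nat.card_congr (Equiv.ofBijective (fun M => ⟨M.1.map f, (card_map f).trans M.2.1,
    (isMatchingOn_map_iff φ M.1).2 M.2.2⟩) ⟨fun M N h => ?_, fun N => ?_⟩)
  · exact Subtype.ext (map_injective f (congrArg Subtype.val h))
  · obtain ⟨M, hM⟩ := exists_map_eq_of_isMatchingOn φ N.2.2
    refine ⟨⟨M, ?_, (isMatchingOn_map_iff φ M).1 (hM ▸ N.2.2)⟩, Subtype.ext hM⟩
    rw [← card_map f, hM, N.2.1]

theorem matchingPoly_eq_matchingPolyOn [Fintype W] (φ : H ↪g G) :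
    matchingPoly H = matchingPolyOn G (univ.map φ.toEmbedding) := by
  simp only [matchingPoly, matchingPolyOn, card_map, card_univ, Nat.card_eq_fintype_card,
    numMatchings_eq_numMatchingsOn φ]

end Embedding

section DeleteVert

variable [Fintype V] (G : SimpleGraph V)

theorem matchingPoly_eq_matchingPolyOn_univ : matchingPoly G = matchingPolyOn G univ := by
  simpa using matchingPoly_eq_matchingPolyOn (SimpleGraph.Embedding.refl (G := G))

variable [DecidableEq V]

theorem matchingPoly_deleteVert (v : V) :
    matchingPoly (deleteVert G v) = matchingPolyOn G (univ.erase v) := by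
  rw [deleteVert, matchingPoly_eq_matchingPolyOn (SimpleGraph.Embedding.induce _)]
  congr 1
  ext x
  simp

theorem matchingPoly_deleteVert_deleteVert (v : V) (u : ({v}ᶜ : Set V)) :
    matchingPoly (deleteVert (deleteVert G v) u) = matchingPolyOn G ((univ.erase v).erase u) := by
  rw [deleteVert, deleteVert, matchingPoly_eq_matchingPolyOn
    ((SimpleGraph.Embedding.induce _).comp (SimpleGraph.Embedding.induce _))]
  congr 1
  ext x
  simp only [mem_map, mem_univ, true_and, mem_erase, and_true]
  constructor
  · rintro ⟨a, rfl⟩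
    exact ⟨fun h => a.2 (Subtype.ext h), a.1.2⟩
  · rintro ⟨hxu, hxv⟩
    exact ⟨⟨⟨x, hxv⟩, fun h => hxu (congrArg Subtype.val h)⟩, rfl⟩

end DeleteVert

/-- If G is θ-super positive then N_θ(G\v) = ∅ for every vertex v. -/
theorem stmt_4 {V : Type*} [Fintype V] (θ : ℝ) (G : SimpleGraph V)
    (h : IsSuperPositive θ G) (v : V) :
    neutralSet θ (deleteVert G v) = ∅ := by
  classical
  refine Set.eq_empty_iff_forall_notMem.2 fun u (hu : IsNeutral θ _ u) => ?_
  obtain ⟨hG, hGv⟩ := h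
  have hP : (matchingPolyOn G univ).rootMultiplicity θ = 0 := by
    rw [← matchingPoly_eq_matchingPolyOn_univ]
    exact hG
  have hA (w : V) : (matchingPolyOn G (univ.erase w)).IsRoot θ := by
    refine (rootMultiplicity_pos'.1 ?_).2
    rw [← matchingPoly_deleteVert, ← mult, hGv w]
    exact one_pos
  have hQ : (matchingPolyOn G ((univ.erase v).erase u)).rootMultiplicity θ = 1 := by
    rw [← matchingPoly_deleteVert_deleteVert, ← hGv v]
    exact hu
  refine rootMultiplicity_ne_one_of_eval_mul_le (fun x => ?_) (hA v) (hA u)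
    (fun hroot => (rootMultiplicity_pos'.2 ⟨matchingPolyOn_ne_zero, hroot⟩).ne' hP) hQ
  have hvu : v ≠ u := fun h => u.2 h.symm
  simpa only [eval_mul] using eval_mul_eval_erase_erase_le x (mem_univ v) (mem_univ (u : V)) hvu

end MatchPoly
end
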